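/- arXiv:1307.7794 — 8 statements merged into one kernel-verified Lean document; each statement's English description precedes it below -/
import Mathlib

section
/- For all integers n ≥ 1 and 1 ≤ r ≤ n: ∑_{l=r}^{n} (-1)^l C(n,l) H_{l-1} = − ∑_{l=r}^{n-1} ((-1)^l / l) C(n-1,l) + (-1)^r C(n-1, r-1) H_{r-1}. -/
/-- The `n`-th harmonic number `H_n = ∑_{k=1}^n 1/k` (with `H_0 = 0`). -/
def harmonic' (n : ℕ) : ℚ := ∑ k ∈ Finset.range n, (1 : ℚ) / (k + 1)

/-- For all integers `n ≥ 1` and `1 ≤ r ≤ n`,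
`∑_{l=r}^{n} (-1)^l C(n,l) H_{l-1}
  = − ∑_{l=r}^{n-1} ((-1)^l/l) C(n-1,l) + (-1)^r C(n-1,r-1) H_{r-1}`. -/
theorem alternating_binomial_harmonic_sum (n r : ℕ) (hn : 1 ≤ n) (hr1 : 1 ≤ r) (hrn : r ≤ n) :
    ∑ l ∈ Finset.Icc r n, (-1 : ℚ) ^ l * (n.choose l : ℚ) * harmonic' (l - 1) =
      - ∑ l ∈ Finset.Icc r (n - 1), (-1 : ℚ) ^ l / (l : ℚ) * ((n - 1).choose l : ℚ)
        + (-1 : ℚ) ^ r * ((n - 1).choose (r - 1) : ℚ) * harmonic' (r - 1) := by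
  obtain ⟨d, rfl⟩ : ∃ d, n = r + d := ⟨n - r, by omega⟩
  clear hrn hn
  induction d generalizing r with
  | zero =>
    rw [Nat.add_zero, Finset.Icc_self, Finset.sum_singleton,
      Finset.Icc_eq_empty (by omega), Finset.sum_empty, Nat.choose_self, Nat.choose_self]
    ring
  | succ d ih =>
    have key := ih (r + 1) (by omega)
    rw [show r + 1 + d = r + (d + 1) from by ring] at key
    rw [show r + (d + 1) - 1 = r + d from by omega] at key ⊢
    rw [show r + 1 - 1 = r from by omega] at key
    have h1 : Finset.Icc r (r + (d + 1)) = insert r (Finset.Icc (r + 1) (r + (d + 1))) := by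
      ext x; simp [Finset.mem_Icc]; omega
    have h2 : Finset.Icc r (r + d) = insert r (Finset.Icc (r + 1) (r + d)) := by
      ext x; simp [Finset.mem_Icc]; omega
    rw [h1, h2, Finset.sum_insert (by simp), Finset.sum_insert (by simp), key]
    obtain ⟨s, rfl⟩ : ∃ s, r = s + 1 := ⟨r - 1, by omega⟩
    have pascal : ((s + 1 + (d + 1)).choose (s + 1) : ℚ)
        = ((s + 1 + d).choose s : ℚ) + ((s + 1 + d).choose (s + 1) : ℚ) := by
      rw [show s + 1 + (d + 1) = (s + 1 + d) + 1 from by ring, Nat.choose_succ_succ]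
      push_cast; ring
    have hharm : harmonic' (s + 1) = harmonic' s + 1 / (s + 1 : ℚ) := by
      rw [harmonic', Finset.sum_range_succ]; rfl
    rw [show s + 1 - 1 = s from by omega, hharm, pascal]
    have hs : ((s : ℚ) + 1) ≠ 0 := by positivity
    push_cast
    field_simp
    ring
end

section
/- For every integer n ≥ 1, the following polynomial identity in two variables x and y over ℚ holds: ∑_{r=2}^{n+1} (x^r / r) C(n-1, r-2) · binom(y, r-1) = (1/(y+1)) · binom(y+n, n+1) + ∑_{r=1}^{n} C(n-1, r-1) · binom(y+n-r, n) · ( (x−1)^{r+1}/(r+1) + (x−1)^r/r ), where (1/(y+1))·binom(y+n, n+1) is the polynomial (y+n)(y+n−1)⋯(y+2)/(n+1)!. -/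
/-- The generalized binomial coefficient `binom(y, k) = y(y−1)⋯(y−k+1)/k!`. -/
def binomQ (y : ℚ) (k : ℕ) : ℚ := (∏ i ∈ Finset.range k, (y - (i : ℚ))) / (k.factorial : ℚ)

/-- The polynomial `binom(y+n, n+1)/(y+1)`, i.e. `y(y+2)(y+3)⋯(y+n)/(n+1)!`
(the result of dividing the generalized binomial coefficient `binom(y+n, n+1)`
through by its factor `y+1`). -/
def binomDiv (n : ℕ) (y : ℚ) : ℚ :=
  y * (∏ i ∈ Finset.range (n - 1), (y + (i : ℚ) + 2)) / ((n + 1).factorial : ℚ)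

/-!
Write `n = m + 1` and `a j = C(m, j) * binom(y, j + 1)`. As polynomials in `x`, both sides have
derivative `x * ∑ j, a j * x ^ j`: for the right-hand side this is the Taylor expansion
`∑ j, a j * x ^ j = ∑ i, C(m, i) * binom(y + m - i, m + 1) * (x - 1) ^ i`, which follows from
Chu–Vandermonde after expanding `x ^ j = ((x - 1) + 1) ^ j`. So it remains to compare the values
at `x = 1`, i.e. `∑ j, a j / (j + 2) = binom(y + m + 1, m + 2) / (y + 1)`. Multiplied by `y + 1`
this is Chu–Vandermonde again, and the factor `y + 1` is cancelled by continuity in `y`.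
-/

open Finset Polynomial

theorem pow_eq_sum_choose_mul_sub_one_pow {R : Type*} [CommRing R] (z : R) {j m : ℕ}
    (hj : j ≤ m) : z ^ j = ∑ i ∈ range (m + 1), (j.choose i : R) * (z - 1) ^ i := by
  rw [← sub_add_cancel z 1, add_pow, sub_add_cancel]
  refine sum_subset_zero_on_sdiff (range_subset_range.2 (by omega)) (fun i hi => ?_)
    (fun i _ => by rw [one_pow, mul_one, mul_comm])
  simp only [mem_sdiff, mem_range] at hi
  rw [Nat.choose_eq_zero_of_lt (by omega), Nat.cast_zero, zero_mul]

namespace Ring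

variable {R : Type*} [CommRing R] [BinomialRing R]

theorem choose_add_natCast_add (r : R) (i k : ℕ) :
    choose (r + k) (i + k) = ∑ t ∈ range (k + 1), (k.choose t : R) * choose r (i + t) := by
  rw [add_choose_eq _ (Commute.all _ _), Nat.sum_antidiagonal_eq_sum_range_succ
      (fun a b => choose r a * choose (k : R) b), Nat.succ_eq_add_one, add_assoc, sum_range_add,
    sum_eq_zero fun a ha => ?_, zero_add]
  · refine sum_congr rfl fun t ht => ?_
    rw [choose_natCast, Nat.add_sub_add_left,
      Nat.choose_symm (Nat.lt_succ_iff.1 (mem_range.1 ht)), mul_comm]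
  · rw [choose_natCast, Nat.choose_eq_zero_of_lt (by simp at ha; omega), Nat.cast_zero, mul_zero]

theorem succ_mul_choose_succ (r : R) (n : ℕ) :
    ((n + 1 : ℕ) : R) * choose (r + 1) (n + 1) = (r + 1) * choose r n := by
  have := choose_add_smul_choose r n 1
  rwa [Nat.choose_one_right, nsmul_eq_mul, Nat.cast_one, choose_one_right] at this

theorem sum_choose_mul_choose_mul_choose (r : R) {m i : ℕ} (hi : i ≤ m) (s : ℕ) :
    ∑ j ∈ range (m + 1), (m.choose j * j.choose i : R) * choose r (j + s) =
      m.choose i * choose (r + (m - i : ℕ)) (m + s) := by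
  obtain ⟨k, rfl⟩ := Nat.exists_eq_add_of_le hi
  rw [Nat.add_sub_cancel_left, add_assoc i k 1, sum_range_add, sum_eq_zero fun j hj => ?_,
    zero_add, add_right_comm i k s, choose_add_natCast_add, mul_sum]
  · refine sum_congr rfl fun t ht => ?_
    have := Nat.choose_mul (n := i + k) (k := i + t) (s := i) (by simp at ht; omega)
    rw [Nat.add_sub_cancel_left, Nat.add_sub_cancel_left] at this
    rw [← Nat.cast_mul, this, Nat.cast_mul, mul_assoc, add_right_comm]
  · rw [Nat.choose_eq_zero_of_lt (mem_range.1 hj), Nat.cast_zero, mul_zero, zero_mul]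

theorem sum_choose_mul_choose_mul_pow (r z : R) (m s : ℕ) :
    ∑ j ∈ range (m + 1), (m.choose j : R) * choose r (j + s) * z ^ j =
      ∑ i ∈ range (m + 1), (m.choose i : R) * choose (r + (m - i : ℕ)) (m + s) * (z - 1) ^ i := by
  calc ∑ j ∈ range (m + 1), (m.choose j : R) * choose r (j + s) * z ^ j
      = ∑ j ∈ range (m + 1), ∑ i ∈ range (m + 1),
          (m.choose j * j.choose i : R) * choose r (j + s) * (z - 1) ^ i := by
        refine sum_congr rfl fun j hj => ?_
        rw [pow_eq_sum_choose_mul_sub_one_pow z (Nat.lt_succ_iff.1 (mem_range.1 hj)), mul_sum]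
        exact sum_congr rfl fun i _ => by ring
    _ = ∑ i ∈ range (m + 1), (∑ j ∈ range (m + 1),
          (m.choose j * j.choose i : R) * choose r (j + s)) * (z - 1) ^ i := by
        rw [sum_comm]
        simp_rw [sum_mul]
    _ = _ := sum_congr rfl fun i hi => by
        rw [sum_choose_mul_choose_mul_choose r (Nat.lt_succ_iff.1 (mem_range.1 hi))]

end Ring

theorem Polynomial.eq_of_derivative_eq_of_eval_eq {R : Type*} [Ring R] [IsAddTorsionFree R]
    {p q : R[X]} (hd : derivative p = derivative q) (a : R)
    (ha : p.eval a = q.eval a) : p = q := by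
  have h := eq_C_of_derivative_eq_zero
    (by rw [derivative_sub, hd, sub_self] : derivative (p - q) = 0)
  have hc := congrArg (eval a) h
  rw [eval_C, eval_sub, ha, sub_self] at hc
  rwa [← hc, map_zero, sub_eq_zero] at h

theorem Polynomial.derivative_C_div_mul_pow {K : Type*} [Field K] [CharZero K] (p : K[X])
    (c : K) {k : ℕ} (hk : k ≠ 0) :
    derivative (C (c / k) * p ^ k) = C c * p ^ (k - 1) * derivative p := by
  rw [derivative_C_mul, derivative_pow, ← mul_assoc, ← mul_assoc, ← C_mul,
    div_mul_cancel₀ _ (Nat.cast_ne_zero.2 hk)]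

theorem sum_div_mul_pow_add_two_eq {K : Type*} [Field K] [CharZero K] (s t : Finset ℕ)
    (a b : ℕ → K) (h : ∀ z, ∑ j ∈ s, a j * z ^ j = ∑ i ∈ t, b i * (z - 1) ^ i) (x : K) :
    ∑ j ∈ s, a j / (j + 2 : ℕ) * x ^ (j + 2) =
      ∑ j ∈ s, a j / (j + 2 : ℕ) +
        ∑ i ∈ t,
          (b i / (i + 2 : ℕ) * (x - 1) ^ (i + 2) + b i / (i + 1 : ℕ) * (x - 1) ^ (i + 1)) := by
  set P : K[X] := ∑ j ∈ s, C (a j / (j + 2 : ℕ)) * X ^ (j + 2)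
  set Q : K[X] := C (∑ j ∈ s, a j / (j + 2 : ℕ)) +
    ∑ i ∈ t, (C (b i / (i + 2 : ℕ)) * (X - 1) ^ (i + 2) + C (b i / (i + 1 : ℕ)) * (X - 1) ^ (i + 1))
  have hX : ∑ j ∈ s, C (a j) * X ^ j = ∑ i ∈ t, C (b i) * (X - 1) ^ i :=
    Polynomial.funext fun z => by simpa [eval_finsetSum] using h z
  have hd : derivative P = derivative Q :=
    calc derivative P = X * ∑ j ∈ s, C (a j) * X ^ j := by
          simp only [P, derivative_sum, derivative_C_div_mul_pow _ _ (Nat.succ_ne_zero _), mul_sum]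
          exact sum_congr rfl fun j _ => by simp; ring
      _ = X * ∑ i ∈ t, C (b i) * (X - 1) ^ i := by rw [hX]
      _ = derivative Q := by
          simp only [Q, derivative_add, derivative_C, zero_add, derivative_sum,
            derivative_C_div_mul_pow _ _ (Nat.succ_ne_zero _), mul_sum]
          exact sum_congr rfl fun i _ => by simp; ring
  have heval : P.eval 1 = Q.eval 1 := by simp [P, Q, eval_finsetSum]
  simpa only [P, Q, eval_add, eval_finsetSum, eval_mul, eval_C, eval_pow, eval_X, eval_sub,
    eval_one] using congrArg (eval x) (eq_of_derivative_eq_of_eval_eq hd 1 heval)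

theorem Continuous.ext_of_mul_sub_eq {𝕜 : Type*} [NontriviallyNormedField 𝕜] {f g : 𝕜 → 𝕜}
    (hf : Continuous f) (hg : Continuous g) (a : 𝕜) (h : ∀ y, (y - a) * f y = (y - a) * g y) :
    f = g :=
  hf.ext_on (dense_compl_singleton a) hg fun y hy => mul_left_cancel₀ (sub_ne_zero.2 hy) (h y)

theorem binomQ_eq_choose (y : ℚ) (k : ℕ) : binomQ y k = Ring.choose y k := by
  rw [Ring.choose_eq_smul, binomQ, smul_eq_mul, ← descPochhammer_eval_eq_prod_range,
    ← eval₂_smulOneHom_eq_smeval, ← descPochhammer_map (Int.castRingHom ℚ), eval_map,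
    inv_mul_eq_div, Subsingleton.elim (Int.castRingHom ℚ) RingHom.smulOneHom]

theorem binomQ_add_one_add_natCast (y : ℚ) (m : ℕ) :
    binomQ (y + 1 + m) (m + 2) = (y + 1) * binomDiv (m + 1) y := by
  have hprod : ∏ i ∈ range m, (y + 1 + m - i) = ∏ i ∈ range m, (y + i + 2) := by
    rw [← prod_range_reflect]
    refine prod_congr rfl fun i hi => ?_
    rw [Nat.sub_sub, Nat.cast_sub (by simp at hi; omega)]
    push_cast
    ring
  rw [binomQ, binomDiv, prod_range_succ, prod_range_succ, hprod, Nat.add_sub_cancel]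
  push_cast
  ring

theorem sum_choose_mul_binomQ_div_eq_binomDiv (m : ℕ) (y : ℚ) :
    ∑ j ∈ range (m + 1), (m.choose j : ℚ) * binomQ y (j + 1) / (j + 2 : ℕ) =
      binomDiv (m + 1) y := by
  have hf : Continuous fun y =>
      ∑ j ∈ range (m + 1), (m.choose j : ℚ) * binomQ y (j + 1) / (j + 2 : ℕ) := by
    simp only [binomQ]
    fun_prop
  have hg : Continuous (binomDiv (m + 1)) := by
    unfold binomDiv
    fun_prop
  refine congrFun (hf.ext_of_mul_sub_eq hg (-1) fun y => ?_) y
  rw [sub_neg_eq_add, ← binomQ_add_one_add_natCast, mul_sum, binomQ_eq_choose, add_comm m 2,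
    Ring.choose_add_natCast_add]
  refine sum_congr rfl fun j _ => ?_
  have := Ring.succ_mul_choose_succ y (j + 1)
  rw [binomQ_eq_choose, add_comm 2 j]
  field_simp
  linear_combination -(m.choose j : ℚ) * this

/-- For every integer `n ≥ 1`, as an identity in two variables `x, y` over `ℚ`:
`∑_{r=2}^{n+1} (x^r/r) C(n-1,r-2) binom(y,r-1)
 = (1/(y+1)) binom(y+n, n+1)
   + ∑_{r=1}^{n} C(n-1,r-1) binom(y+n-r, n) ((x−1)^{r+1}/(r+1) + (x−1)^r/r)`. -/
theorem power_two_var_identity (n : ℕ) (hn : 1 ≤ n) (x y : ℚ) :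
    ∑ r ∈ Finset.Icc 2 (n + 1),
        x ^ r / (r : ℚ) * ((n - 1).choose (r - 2) : ℚ) * binomQ y (r - 1) =
      binomDiv n y
        + ∑ r ∈ Finset.Icc 1 n,
            ((n - 1).choose (r - 1) : ℚ) * binomQ (y + (n : ℚ) - (r : ℚ)) n *
              ((x - 1) ^ (r + 1) / ((r : ℚ) + 1) + (x - 1) ^ r / (r : ℚ)) := by
  obtain ⟨m, rfl⟩ := Nat.exists_eq_add_of_le' hn
  set a : ℕ → ℚ := fun j => m.choose j * binomQ y (j + 1)
  set b : ℕ → ℚ := fun i => m.choose i * binomQ (y + (m - i : ℕ)) (m + 1)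
  have taylor (z : ℚ) :
      ∑ j ∈ range (m + 1), a j * z ^ j = ∑ i ∈ range (m + 1), b i * (z - 1) ^ i := by
    simpa only [a, b, binomQ_eq_choose] using Ring.sum_choose_mul_choose_mul_pow y z m 1
  simp only [← Ico_add_one_right_eq_Icc, sum_Ico_eq_sum_range, Nat.add_sub_cancel,
    show m + 1 + 1 + 1 - 2 = m + 1 by omega]
  rw [← sum_choose_mul_binomQ_div_eq_binomDiv]
  convert sum_div_mul_pow_add_two_eq _ _ a b taylor x using 1
  · refine sum_congr rfl fun j _ => ?_
    rw [Nat.add_sub_cancel_left, show 2 + j - 1 = j + 1 by omega, add_comm 2 j]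
    ring
  · congr 1
    refine sum_congr rfl fun i hi => ?_
    have hshift : y + ((m + 1 : ℕ) : ℚ) - ((1 + i : ℕ) : ℚ) = y + ((m - i : ℕ) : ℚ) := by
      rw [Nat.cast_sub (Nat.lt_succ_iff.1 (mem_range.1 hi))]
      push_cast
      ring
    rw [Nat.add_sub_cancel_left, hshift, add_comm 1 i]
    push_cast
    ring
end

section
/- For all integers n ≥ 0 and d ≥ 0, the following polynomial identity in two variables x and y over ℚ holds: ∑_{r=0}^{n} x^r C(n,r) · binom(y, r+d) = ∑_{j=0}^{n} (x−1)^j C(n,j) · binom(y+n−j, n+d). -/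
lemma binomQ_succ (w : ℚ) (N : ℕ) :
    binomQ (w + 1) (N + 1) = binomQ w (N + 1) + binomQ w N := by
  have hP : ∏ i ∈ Finset.range (N+1), (w + 1 - (i:ℚ))
      = (w + 1) * ∏ i ∈ Finset.range N, (w - (i:ℚ)) := by
    rw [Finset.prod_range_succ']
    simp only [Nat.cast_zero, sub_zero]
    rw [mul_comm]
    congr 1
    apply Finset.prod_congr rfl
    intro i _
    push_cast
    ring
  have h2 : ∏ i ∈ Finset.range (N+1), (w - (i:ℚ))
      = (∏ i ∈ Finset.range N, (w - (i:ℚ))) * (w - N) := Finset.prod_range_succ _ _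
  have hf : (N.factorial : ℚ) ≠ 0 := Nat.cast_ne_zero.2 N.factorial_ne_zero
  simp only [binomQ, hP, h2, Nat.factorial_succ]
  push_cast
  field_simp
  ring

/-- For all integers `n ≥ 0` and `d ≥ 0`, as an identity in two variables `x, y` over `ℚ`:
`∑_{r=0}^{n} x^r C(n,r) binom(y, r+d) = ∑_{j=0}^{n} (x−1)^j C(n,j) binom(y+n−j, n+d)`. -/
theorem binomial_shift_identity (n d : ℕ) (x y : ℚ) :
    ∑ r ∈ Finset.range (n + 1), x ^ r * (n.choose r : ℚ) * binomQ y (r + d) =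
      ∑ j ∈ Finset.range (n + 1),
        (x - 1) ^ j * (n.choose j : ℚ) * binomQ (y + (n : ℚ) - (j : ℚ)) (n + d) := by
  induction n generalizing d y with
  | zero => simp [binomQ]
  | succ n ih =>
    have hL : ∑ r ∈ Finset.range (n+1+1), x ^ r * ((n+1).choose r : ℚ) * binomQ y (r + d)
        = (∑ r ∈ Finset.range (n+1), x ^ r * (n.choose r : ℚ) * binomQ y (r + d))
          + x * ∑ r ∈ Finset.range (n+1), x ^ r * (n.choose r : ℚ) * binomQ y (r + (d+1)) := by
      rw [Finset.sum_range_succ' _ (n+1)]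
      have hterm : ∀ r ∈ Finset.range (n+1),
          x ^ (r+1) * ((n+1).choose (r+1) : ℚ) * binomQ y (r + 1 + d)
          = x ^ (r+1) * ((n.choose (r+1) : ℚ)) * binomQ y (r + 1 + d)
            + x * (x ^ r * (n.choose r : ℚ) * binomQ y (r + (d+1))) := by
        intro r _
        have harg : r + (d + 1) = r + 1 + d := by omega
        rw [harg, Nat.choose_succ_succ]
        push_cast
        ring
      rw [Finset.sum_congr rfl hterm, Finset.sum_add_distrib, ← Finset.mul_sum]
      have h1 : (∑ r ∈ Finset.range (n+1),
            x ^ (r+1) * ((n.choose (r+1) : ℚ)) * binomQ y (r + 1 + d))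
          + x ^ 0 * ((n+1).choose 0 : ℚ) * binomQ y (0 + d)
          = ∑ r ∈ Finset.range (n+1), x ^ r * (n.choose r : ℚ) * binomQ y (r + d) := by
        rw [Finset.sum_range_succ _ n, Finset.sum_range_succ' _ n]
        simp [Nat.choose_succ_self]
      linarith [h1]
    have hR : ∑ j ∈ Finset.range (n+1+1),
          (x - 1) ^ j * ((n+1).choose j : ℚ) * binomQ (y + ((n:ℚ)+1) - (j:ℚ)) (n + 1 + d)
        = (∑ j ∈ Finset.range (n+1),
            (x - 1) ^ j * (n.choose j : ℚ) * binomQ ((y+1) + (n:ℚ) - (j:ℚ)) (n + (d+1)))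
          + (x - 1) * ∑ j ∈ Finset.range (n+1),
            (x - 1) ^ j * (n.choose j : ℚ) * binomQ (y + (n:ℚ) - (j:ℚ)) (n + (d+1)) := by
      rw [Finset.sum_range_succ' _ (n+1)]
      have hterm : ∀ j ∈ Finset.range (n+1),
          (x - 1) ^ (j+1) * ((n+1).choose (j+1) : ℚ) * binomQ (y + ((n:ℚ)+1) - ((j:ℚ)+1)) (n + 1 + d)
          = (x - 1) ^ (j+1) * ((n.choose (j+1) : ℚ)) * binomQ ((y+1) + (n:ℚ) - ((j:ℚ)+1)) (n + (d+1))
            + (x - 1) * ((x - 1) ^ j * (n.choose j : ℚ) * binomQ (y + (n:ℚ) - (j:ℚ)) (n + (d+1))) := by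
        intro j _
        have harg1 : y + ((n:ℚ)+1) - ((j:ℚ)+1) = (y+1) + (n:ℚ) - ((j:ℚ)+1) := by ring
        have harg2 : (y+1) + (n:ℚ) - ((j:ℚ)+1) = y + (n:ℚ) - (j:ℚ) := by ring
        have harg3 : n + 1 + d = n + (d+1) := by omega
        rw [harg1, harg3, Nat.choose_succ_succ]
        push_cast
        rw [harg2]
        ring
      have hcast : ∀ j ∈ Finset.range (n+1),
          (x - 1) ^ (j+1) * ((n+1).choose (j+1) : ℚ) * binomQ (y + ((n:ℚ)+1) - ((j+1 : ℕ):ℚ)) (n + 1 + d)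
          = (x - 1) ^ (j+1) * ((n.choose (j+1) : ℚ)) * binomQ ((y+1) + (n:ℚ) - ((j:ℚ)+1)) (n + (d+1))
            + (x - 1) * ((x - 1) ^ j * (n.choose j : ℚ) * binomQ (y + (n:ℚ) - (j:ℚ)) (n + (d+1))) := by
        intro j hj
        have := hterm j hj
        push_cast at this ⊢
        exact this
      rw [Finset.sum_congr rfl hcast, Finset.sum_add_distrib, ← Finset.mul_sum]
      have h1 : (∑ j ∈ Finset.range (n+1),
            (x - 1) ^ (j+1) * ((n.choose (j+1) : ℚ)) * binomQ ((y+1) + (n:ℚ) - ((j:ℚ)+1)) (n + (d+1)))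
          + (x - 1) ^ 0 * ((n+1).choose 0 : ℚ) * binomQ (y + ((n:ℚ)+1) - ((0:ℕ):ℚ)) (n + 1 + d)
          = ∑ j ∈ Finset.range (n+1),
            (x - 1) ^ j * (n.choose j : ℚ) * binomQ ((y+1) + (n:ℚ) - (j:ℚ)) (n + (d+1)) := by
        rw [Finset.sum_range_succ _ n, Finset.sum_range_succ' _ n]
        simp only [Nat.choose_succ_self, Nat.cast_zero, Nat.cast_add, Nat.cast_one,
          Nat.choose_zero_right, pow_zero, one_mul, Nat.cast_ofNat, sub_zero]
        rw [show n + 1 + d = n + (d+1) from by omega,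
          show y + ((n:ℚ)+1) = (y+1) + (n:ℚ) from by ring]
        ring
      linarith [h1]
    have hgoal1 : ∑ j ∈ Finset.range (n+1+1),
          (x - 1) ^ j * ((n+1).choose j : ℚ) * binomQ (y + ((n+1:ℕ):ℚ) - (j:ℚ)) (n + 1 + d)
        = ∑ j ∈ Finset.range (n+1+1),
          (x - 1) ^ j * ((n+1).choose j : ℚ) * binomQ (y + ((n:ℚ)+1) - (j:ℚ)) (n + 1 + d) := by
      apply Finset.sum_congr rfl
      intro j _
      norm_num
    have hsum : (∑ r ∈ Finset.range (n+1), x ^ r * (n.choose r : ℚ) * binomQ y (r + d))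
          + ∑ r ∈ Finset.range (n+1), x ^ r * (n.choose r : ℚ) * binomQ y (r + (d+1))
        = ∑ r ∈ Finset.range (n+1), x ^ r * (n.choose r : ℚ) * binomQ (y+1) (r + (d+1)) := by
      rw [← Finset.sum_add_distrib]
      apply Finset.sum_congr rfl
      intro r _
      have harg : r + (d+1) = (r + d) + 1 := by omega
      rw [harg, binomQ_succ]
      ring
    rw [hgoal1, hL, hR, ← ih (d+1) (y+1), ← ih (d+1) y]
    linear_combination hsum
end

section
/- For every integer n ≥ 1, the following polynomial identity in the variable y over ℚ holds: ∑_{r=2}^{n+1} (1/r) C(n-1, r-2) · binom(y, r-1) = (1/(y+1)) · binom(y+n, n+1), where the right-hand side is the polynomial (y+n)(y+n−1)⋯(y+2)/(n+1)!. -/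
/-!
Absorption, `(y + 1) * binom(y, r - 1) = r * binom(y + 1, r)`, turns `(y + 1)` times the left-hand
side into the Chu–Vandermonde sum `∑ₖ C(n - 1, k) binom(y + 1, k + 2) = binom(y + n, n + 1)`, which
is also `(y + 1)` times the right-hand side. Cancelling `y + 1` is legitimate only in a domain where
it is nonzero, so both sides are compared at the generic point `X` of `ℚ[X]` and then evaluated.
-/

open Finset Polynomial

namespace Ring

section
variable {R : Type*} [NonAssocRing R] [Pow R ℕ] [NatPowAssoc R] [BinomialRing R]

theorem succ_nsmul_choose_succ (r : R) (k : ℕ) :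
    (k + 1) • choose (r + 1) (k + 1) = (r + 1) * choose r k := by
  simpa [add_comm 1 k] using choose_add_smul_choose r k 1

theorem sum_range_choose_nsmul_choose_add (m a : ℕ) (r : R) :
    ∑ k ∈ range (m + 1), m.choose k • choose r (k + a) = choose (r + m) (m + a) := by
  induction m generalizing a with
  | zero => simp
  | succ m ih =>
    have ih' := ih (a + 1)
    simp only [← add_assoc] at ih'
    rw [sum_choose_succ_nsmul (fun i _ => choose r (i + a)) m]
    simp only [add_right_comm _ 1 a]
    rw [ih, ih', Nat.cast_succ, ← add_assoc, choose_succ_succ]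

end

theorem factorial_nsmul_choose_eq_prod {R : Type*} [CommRing R] [BinomialRing R] (r : R) (k : ℕ) :
    k.factorial • choose r k = ∏ i ∈ range k, (r - i) := by
  rw [← descPochhammer_eq_factorial_smul_choose, ← descPochhammer_eval_eq_prod_range,
    ← descPochhammer_map (algebraMap ℤ R), eval_map_algebraMap, aeval_eq_smeval]

theorem choose_eq_inv_smul_prod {A : Type*} [CommRing A] [Algebra ℚ A] [BinomialRing A]
    (r : A) (k : ℕ) :
    choose r k = (k.factorial : ℚ)⁻¹ • ∏ i ∈ range k, (r - i) := by
  rw [← factorial_nsmul_choose_eq_prod, ← Nat.cast_smul_eq_nsmul ℚ, inv_smul_smul₀ (by positivity)]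

end Ring

section
variable {A : Type*} [CommRing A] [Algebra ℚ A]

def chooseSum [BinomialRing A] (n : ℕ) (r : A) : A :=
  ∑ k ∈ Icc 2 (n + 1), ((1 / k : ℚ) * (n - 1).choose (k - 2)) • Ring.choose r (k - 1)

def chooseQuot (n : ℕ) (r : A) : A :=
  ((n + 1).factorial : ℚ)⁻¹ • (r * ∏ i ∈ range (n - 1), (r + i + 2))

theorem add_one_mul_chooseSum [BinomialRing A] {n : ℕ} (hn : 1 ≤ n) (r : A) :
    (r + 1) * chooseSum n r = Ring.choose (r + n) (n + 1) := by
  obtain ⟨m, rfl⟩ := Nat.exists_eq_add_of_le' hn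
  have hsummand (k : ℕ) :
      (r + 1) * (((1 / (2 + k : ℕ) : ℚ) * m.choose (2 + k - 2)) • Ring.choose r (2 + k - 1)) =
        m.choose k • Ring.choose (r + 1) (k + 2) := by
    rw [show 2 + k - 2 = k by omega, show 2 + k - 1 = k + 1 by omega, mul_smul_comm,
      ← Ring.succ_nsmul_choose_succ, ← Nat.cast_smul_eq_nsmul ℚ, ← Nat.cast_smul_eq_nsmul ℚ,
      smul_smul]
    congr 1
    push_cast
    field_simp
    ring
  rw [chooseSum, mul_sum, ← Ico_add_one_right_eq_Icc, sum_Ico_eq_sum_range,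
    show m + 1 + 1 + 1 - 2 = m + 1 by omega, Nat.add_sub_cancel]
  simp only [hsummand]
  rw [Ring.sum_range_choose_nsmul_choose_add, Nat.cast_succ, add_right_comm r, add_assoc]

theorem add_one_mul_chooseQuot [BinomialRing A] {n : ℕ} (hn : 1 ≤ n) (r : A) :
    (r + 1) * chooseQuot n r = Ring.choose (r + n) (n + 1) := by
  obtain ⟨m, rfl⟩ := Nat.exists_eq_add_of_le' hn
  have hreflect : ∏ i ∈ range (m + 2), (r + ↑(m + 1) - i) = ∏ i ∈ range (m + 2), (r + i) := by
    rw [← prod_range_reflect]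
    refine prod_congr rfl fun i hi => ?_
    rw [mem_range] at hi
    rw [Nat.cast_sub (by omega)]
    push_cast
    ring
  rw [chooseQuot, Ring.choose_eq_inv_smul_prod, mul_smul_comm, hreflect, prod_range_succ',
    prod_range_succ', Nat.add_sub_cancel]
  push_cast
  ring_nf

theorem map_chooseSum [BinomialRing A] {B : Type*} [CommRing B] [Algebra ℚ B] [BinomialRing B]
    (f : A →ₐ[ℚ] B) (n : ℕ) (r : A) :
    f (chooseSum n r) = chooseSum n (f r) := by
  simp [chooseSum, Ring.map_choose]

theorem map_chooseQuot {B : Type*} [CommRing B] [Algebra ℚ B] (f : A →ₐ[ℚ] B) (n : ℕ) (r : A) :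
    f (chooseQuot n r) = chooseQuot n (f r) := by
  simp [chooseQuot, map_ofNat]

end

theorem chooseSum_eq_sum_binomQ (n : ℕ) (y : ℚ) :
    chooseSum n y = ∑ r ∈ Finset.Icc 2 (n + 1),
        (1 / (r : ℚ)) * ((n - 1).choose (r - 2) : ℚ) * binomQ y (r - 1) := by
  simp [chooseSum, binomQ_eq_choose]

theorem chooseQuot_eq_binomDiv (n : ℕ) (y : ℚ) : chooseQuot n y = binomDiv n y := by
  rw [chooseQuot, binomDiv, smul_eq_mul, inv_mul_eq_div]

/-- For every integer `n ≥ 1`, as a polynomial identity in `y` over `ℚ`: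
`∑_{r=2}^{n+1} (1/r) C(n-1,r-2) binom(y,r-1) = (1/(y+1)) binom(y+n, n+1)`. -/
theorem binomial_sum_eval_identity (n : ℕ) (hn : 1 ≤ n) (y : ℚ) :
    ∑ r ∈ Finset.Icc 2 (n + 1),
        (1 / (r : ℚ)) * ((n - 1).choose (r - 2) : ℚ) * binomQ y (r - 1) =
      binomDiv n y := by
  have hX : chooseSum n (X : ℚ[X]) = chooseQuot n X :=
    mul_left_cancel₀ (X_add_C_ne_zero 1) <| by
      rw [C_1, add_one_mul_chooseSum hn, add_one_mul_chooseQuot hn]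
  rw [← chooseSum_eq_sum_binomQ, ← chooseQuot_eq_binomDiv, ← aeval_X (R := ℚ) y, ← map_chooseSum,
    ← map_chooseQuot, hX]
end

section
/- For every integer n ≥ 1, the following polynomial identity in two variables x and y over ℚ holds: ∑_{r=2}^{n+1} x^{r-1} C(n-1, r-2) · binom(y, r-1) = x · ∑_{r=1}^{n} C(n-1, r-1) · binom(y+n−r, n) · (x−1)^{r-1}. -/
open Finset Polynomial

section BinomialRing

variable {R : Type*}

theorem Ring.sum_range_choose_mul_choose_add_eq_choose [Ring R] [BinomialRing R]
    (r : R) (p t : ℕ) :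
    ∑ i ∈ range (p + 1), (p.choose i : R) * Ring.choose r (t + i) =
      Ring.choose (r + p) (t + p) := by
  rw [Ring.add_choose_eq _ (Nat.cast_commute p r).symm,
    Nat.sum_antidiagonal_eq_sum_range_succ (fun a b => Ring.choose r a * Ring.choose (p : R) b),
    Nat.succ_eq_add_one, add_assoc, sum_range_add _ t]
  have hlow : ∀ a ∈ range t, Ring.choose r a * Ring.choose (p : R) (t + p - a) = 0 := by
    intro a ha
    rw [Ring.choose_natCast, Nat.choose_eq_zero_of_lt (by grind), Nat.cast_zero, mul_zero]
  rw [sum_eq_zero hlow, zero_add]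
  refine sum_congr rfl fun i hi => ?_
  rw [Ring.choose_natCast, show t + p - (t + i) = p - i by omega,
    Nat.choose_symm (by grind), (Nat.cast_commute _ _).eq]

theorem Ring.sum_choose_mul_choose_mul_choose_succ [Ring R] [BinomialRing R] (r : R) {m j : ℕ}
    (hj : j ≤ m) :
    ∑ k ∈ range (m + 1), (m.choose k * k.choose j : R) * Ring.choose r (k + 1) =
      (m.choose j : R) * Ring.choose (r + (m - j : ℕ)) (m + 1) := by
  have hsplit : m + 1 = j + (m - j + 1) := by omega
  have hlow : ∀ k ∈ range j, (m.choose k * k.choose j : R) * Ring.choose r (k + 1) = 0 := by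
    intro k hk
    rw [Nat.choose_eq_zero_of_lt (mem_range.1 hk), Nat.cast_zero, mul_zero, zero_mul]
  rw [hsplit, sum_range_add, sum_eq_zero hlow, zero_add, ← hsplit,
    show m + 1 = j + 1 + (m - j) by omega, ← Ring.sum_range_choose_mul_choose_add_eq_choose,
    mul_sum]
  refine sum_congr rfl fun i _ => ?_
  rw [← Nat.cast_mul, Nat.choose_mul (Nat.le_add_right j i), Nat.add_sub_cancel_left,
    Nat.cast_mul, mul_assoc, add_right_comm]

theorem pow_eq_sum_range_choose_mul_sub_one_pow [Ring R] (x : R) {k N : ℕ} (hk : k < N) :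
    x ^ k = ∑ j ∈ range N, (k.choose j : R) * (x - 1) ^ j := by
  conv_lhs => rw [← sub_add_cancel x 1, (Commute.one_right (x - 1)).add_pow]
  rw [← sum_subset (range_subset_range.2 (Nat.succ_le_of_lt hk))]
  · exact sum_congr rfl fun j _ => by rw [one_pow, mul_one, (Nat.cast_commute _ _).eq]
  · intro j _ hj
    rw [Nat.choose_eq_zero_of_lt (by simpa using hj), Nat.cast_zero, zero_mul]

theorem sum_choose_mul_choose_succ_mul_pow_eq [CommRing R] [BinomialRing R] (x y : R) (m : ℕ) :
    ∑ k ∈ range (m + 1), (m.choose k : R) * Ring.choose y (k + 1) * x ^ k =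
      ∑ j ∈ range (m + 1),
        (m.choose j : R) * Ring.choose (y + (m - j : ℕ)) (m + 1) * (x - 1) ^ j := by
  calc ∑ k ∈ range (m + 1), (m.choose k : R) * Ring.choose y (k + 1) * x ^ k
      = ∑ k ∈ range (m + 1), ∑ j ∈ range (m + 1),
          (m.choose k * k.choose j : R) * Ring.choose y (k + 1) * (x - 1) ^ j := by
        refine sum_congr rfl fun k hk => ?_
        rw [pow_eq_sum_range_choose_mul_sub_one_pow x (mem_range.1 hk), mul_sum]
        exact sum_congr rfl fun j _ => by ring
    _ = ∑ j ∈ range (m + 1), (∑ k ∈ range (m + 1),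
          (m.choose k * k.choose j : R) * Ring.choose y (k + 1)) * (x - 1) ^ j := by
        rw [sum_comm]
        simp only [sum_mul]
    _ = _ := sum_congr rfl fun j hj => by
        rw [Ring.sum_choose_mul_choose_mul_choose_succ y (Nat.le_of_lt_succ (mem_range.1 hj))]

end BinomialRing

theorem derivative_two_var_identity_general (n : ℕ) (x y : ℚ) :
    ∑ r ∈ Finset.Icc 2 (n + 1),
        x ^ (r - 1) * ((n - 1).choose (r - 2) : ℚ) * binomQ y (r - 1) =
      x * ∑ r ∈ Finset.Icc 1 n,
            ((n - 1).choose (r - 1) : ℚ) * binomQ (y + (n : ℚ) - (r : ℚ)) n *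
              (x - 1) ^ (r - 1) := by
  cases n with
  | zero => simp
  | succ m =>
    have hL : ∑ r ∈ Icc 2 (m + 2), x ^ (r - 1) * (m.choose (r - 2) : ℚ) * binomQ y (r - 1) =
        x * ∑ k ∈ range (m + 1), (m.choose k : ℚ) * Ring.choose y (k + 1) * x ^ k := by
      rw [← Ico_add_one_right_eq_Icc, sum_Ico_eq_sum_range, mul_sum]
      refine sum_congr (by simp) fun k _ => ?_
      rw [show 2 + k - 1 = k + 1 by omega, Nat.add_sub_cancel_left, binomQ_eq_choose]
      ring
    have hR : ∑ r ∈ Icc 1 (m + 1),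
          (m.choose (r - 1) : ℚ) * binomQ (y + (m + 1 : ℕ) - r) (m + 1) * (x - 1) ^ (r - 1) =
        ∑ j ∈ range (m + 1),
          (m.choose j : ℚ) * Ring.choose (y + (m - j : ℕ)) (m + 1) * (x - 1) ^ j := by
      rw [← Ico_add_one_right_eq_Icc, sum_Ico_eq_sum_range]
      refine sum_congr (by simp) fun j hj => ?_
      rw [Nat.add_sub_cancel_left, binomQ_eq_choose,
        Nat.cast_sub (by simpa [Nat.lt_succ_iff] using hj)]
      push_cast
      congr 3
      ring
    rw [Nat.add_sub_cancel, hL, hR, sum_choose_mul_choose_succ_mul_pow_eq]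

/-- For every integer `n ≥ 1`, as an identity in two variables `x, y` over `ℚ`:
`∑_{r=2}^{n+1} x^{r-1} C(n-1,r-2) binom(y,r-1)
 = x ∑_{r=1}^{n} C(n-1,r-1) binom(y+n−r, n) (x−1)^{r-1}`. -/
theorem derivative_two_var_identity (n : ℕ) (hn : 1 ≤ n) (x y : ℚ) :
    ∑ r ∈ Finset.Icc 2 (n + 1),
        x ^ (r - 1) * ((n - 1).choose (r - 2) : ℚ) * binomQ y (r - 1) =
      x * ∑ r ∈ Finset.Icc 1 n,
            ((n - 1).choose (r - 1) : ℚ) * binomQ (y + (n : ℚ) - (r : ℚ)) n *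
              (x - 1) ^ (r - 1) :=
  derivative_two_var_identity_general n x y
end

section
/- For every integer r ≥ 1, the derivative of the function y ↦ binom(y, r−1) evaluated at y = −1 equals (−1)^r H_{r−1}. -/
/-- The `n`-th harmonic number `H_n = ∑_{k=1}^n 1/k` (with `H_0 = 0`), as a real number. -/
noncomputable def harmonicR (n : ℕ) : ℝ := ∑ k ∈ Finset.range n, (1 : ℝ) / (k + 1)

/-- The generalized binomial coefficient `binom(y, k) = y(y−1)⋯(y−k+1)/k!`, for real `y`. -/
noncomputable def binomR (y : ℝ) (k : ℕ) : ℝ := (∏ i ∈ Finset.range k, (y - (i : ℝ))) / (k.factorial : ℝ)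

/-! The logarithmic derivative of `∏ (y - i)` is `∑ 1 / (y - i)`; at `y = -1` the product is
`(-1)^k k!`, so `binom(y, k)` takes the value `(-1)^k` there, while the sum is `-H_k`. -/

open Finset

theorem hasDerivAt_prod_sub {ι : Type*} (s : Finset ι) (a : ι → ℝ) {x : ℝ}
    (hx : ∀ i ∈ s, x ≠ a i) :
    HasDerivAt (fun y => ∏ i ∈ s, (y - a i))
      ((∏ i ∈ s, (x - a i)) * ∑ i ∈ s, (x - a i)⁻¹) x := by
  classical
  induction s using Finset.induction_on with
  | empty => simpa using hasDerivAt_const x (1 : ℝ)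
  | insert j t hj ih =>
    have hxj : x - a j ≠ 0 := sub_ne_zero.mpr (hx j (mem_insert_self j t))
    have hrest := ih fun i hi => hx i (mem_insert_of_mem hi)
    simp only [prod_insert hj, sum_insert hj]
    refine (((hasDerivAt_id' x).sub_const (a j)).fun_mul hrest).congr_deriv ?_
    field_simp

theorem hasDerivAt_binomR (k : ℕ) {x : ℝ} (hx : ∀ i < k, x ≠ i) :
    HasDerivAt (fun y => binomR y k) (binomR x k * ∑ i ∈ range k, (x - i)⁻¹) x := by
  have hprod := hasDerivAt_prod_sub (range k) (fun i : ℕ => (i : ℝ))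
    fun i hi => hx i (mem_range.mp hi)
  refine (hprod.div_const (k.factorial : ℝ)).congr_deriv ?_
  rw [binomR]
  ring

theorem prod_range_neg_one_sub (k : ℕ) :
    ∏ i ∈ range k, ((-1 : ℝ) - i) = (-1) ^ k * k.factorial := by
  induction k with
  | zero => simp
  | succ n ih =>
    rw [prod_range_succ, ih, Nat.factorial_succ, pow_succ]
    push_cast
    ring

theorem binomR_neg_one (k : ℕ) : binomR (-1) k = (-1) ^ k := by
  rw [binomR, prod_range_neg_one_sub, mul_div_cancel_right₀]
  exact_mod_cast k.factorial_ne_zero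

theorem sum_range_inv_neg_one_sub (k : ℕ) :
    ∑ i ∈ range k, ((-1 : ℝ) - i)⁻¹ = -harmonicR k := by
  rw [harmonicR, ← sum_neg_distrib]
  refine sum_congr rfl fun i _ => ?_
  rw [one_div, ← inv_neg, neg_add', neg_sub_comm]

/-- For every integer `r ≥ 1`, the derivative of `y ↦ binom(y, r−1)` at `y = −1`
equals `(−1)^r H_{r−1}`. -/
theorem deriv_binom_at_neg_one (r : ℕ) (hr : 1 ≤ r) :
    deriv (fun y : ℝ => binomR y (r - 1)) (-1) = (-1 : ℝ) ^ r * harmonicR (r - 1) := by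
  obtain ⟨k, rfl⟩ := Nat.exists_eq_add_of_le' hr
  have hroots : ∀ i < k, (-1 : ℝ) ≠ i := fun i _ => by
    have : (0 : ℝ) ≤ i := i.cast_nonneg
    linarith
  rw [Nat.add_sub_cancel, (hasDerivAt_binomR k hroots).deriv, binomR_neg_one,
    sum_range_inv_neg_one_sub, pow_succ]
  ring
end

section
/- For every integer n ≥ 1, the derivative of the polynomial function y ↦ (1/(y+1))·binom(y+n, n+1) = (y+n)(y+n−1)⋯(y+2)/(n+1)! evaluated at y = −1 equals (1 − H_{n−1})/(n(n+1)). -/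
/-!
With `P(y) = ∏_{i<m} (y + i + 2)` the function is `y P(y) / (m+2)!`, where `m = n - 1`.
At `y = -1` the factors of `P` are `1, …, m`, so `P(-1) = m!`, and the product rule,
applied one factor at a time, gives `P'(-1) = m! H_m`. Hence the derivative is
`(P(-1) - P'(-1)) / (m+2)! = m! (1 - H_m) / (m+2)!`.
-/

open Finset Nat

theorem harmonicR_succ (m : ℕ) : harmonicR (m + 1) = harmonicR m + 1 / (m + 1) := by
  simp only [harmonicR, sum_range_succ]

theorem prod_range_neg_one_add_nat_add_two (m : ℕ) :
    ∏ i ∈ range m, ((-1 : ℝ) + i + 2) = m ! := by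
  rw [← prod_range_add_one_eq_factorial]
  push_cast
  exact prod_congr rfl fun i _ => by ring

theorem hasDerivAt_prod_range_add_nat_add_two (m : ℕ) :
    HasDerivAt (fun y : ℝ => ∏ i ∈ range m, (y + i + 2)) (m ! * harmonicR m) (-1) := by
  induction m with
  | zero => simpa [harmonicR] using hasDerivAt_const (-1 : ℝ) (1 : ℝ)
  | succ m ih =>
    simp only [prod_range_succ]
    refine (ih.fun_mul (((hasDerivAt_id' (-1 : ℝ)).add_const (m : ℝ)).add_const 2)).congr_deriv ?_
    rw [prod_range_neg_one_add_nat_add_two, harmonicR_succ, factorial_succ]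
    push_cast
    field_simp
    ring

/-- For every integer `n ≥ 1`, the derivative at `y = −1` of the polynomial function
`y ↦ (1/(y+1)) binom(y+n, n+1) = y(y+2)(y+3)⋯(y+n)/(n+1)!` equals `(1 − H_{n−1})/(n(n+1))`. -/
theorem deriv_binomDiv_at_neg_one (n : ℕ) (hn : 1 ≤ n) :
    deriv (fun y : ℝ =>
        y * (∏ i ∈ Finset.range (n - 1), (y + (i : ℝ) + 2)) / ((n + 1).factorial : ℝ)) (-1) =
      (1 - harmonicR (n - 1)) / ((n : ℝ) * ((n : ℝ) + 1)) := by
  obtain ⟨m, rfl⟩ : ∃ m, n = m + 1 := ⟨n - 1, by omega⟩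
  rw [Nat.add_sub_cancel]
  have hf := ((hasDerivAt_id' (-1 : ℝ)).fun_mul
    (hasDerivAt_prod_range_add_nat_add_two m)).div_const ((m + 1 + 1) ! : ℝ)
  rw [hf.deriv, prod_range_neg_one_add_nat_add_two, factorial_succ, factorial_succ]
  push_cast
  field_simp
  ring
end

section
/- For all integers n ≥ 1 and 1 ≤ r ≤ n−1, the derivative of the function y ↦ binom(y+n−r, n) evaluated at y = −1 equals (−1)^r / (n · C(n−1, r)). -/
open Finset
open scoped Nat

theorem hasDerivAt_sub_mul_of_continuousAt {𝕜 : Type*} [NontriviallyNormedField 𝕜]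
    {g : 𝕜 → 𝕜} {x : 𝕜} (hg : ContinuousAt g x) :
    HasDerivAt (fun y => (y - x) * g y) (g x) x := by
  rw [hasDerivAt_iff_tendsto_slope]
  refine (hg.tendsto.mono_left nhdsWithin_le_nhds).congr' ?_
  filter_upwards [self_mem_nhdsWithin] with y hy
  rw [slope_def_field, sub_self, zero_mul, sub_zero, mul_div_cancel_left₀ _ (sub_ne_zero.2 hy)]

section FallingFactorial

variable {R : Type*} [CommRing R]

theorem prod_range_add_one_add_sub (m k : ℕ) (y : R) :
    ∏ i ∈ range (m + 1 + k), (y - i) =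
      (y - m) * ((∏ i ∈ range m, (y - i)) * ∏ i ∈ range k, (y - (m + 1 + i : ℕ))) := by
  rw [prod_range_add, prod_range_succ]
  ring

theorem prod_range_natCast_sub_eq_factorial (m : ℕ) :
    ∏ i ∈ range m, ((m : R) - i) = m ! := by
  rw [← descPochhammer_eval_eq_prod_range, descPochhammer_eval_eq_descFactorial,
    Nat.descFactorial_self]

theorem prod_range_natCast_sub_add_one_add (m k : ℕ) :
    ∏ i ∈ range k, ((m : R) - (m + 1 + i : ℕ)) = (-1) ^ k * k ! := by
  have h : ∀ i ∈ range k, ((m : R) - (m + 1 + i : ℕ)) = -1 * ((i + 1 : ℕ) : R) := by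
    intro i _
    push_cast
    ring
  rw [prod_congr rfl h, prod_mul_distrib, prod_const, card_range, ← Nat.cast_prod,
    prod_range_add_one_eq_factorial]

end FallingFactorial

theorem factorial_mul_factorial_div_factorial_add_one {K : Type*} [Field K] [CharZero K]
    (m k : ℕ) : (m ! * k ! : K) / (m + 1 + k)! = 1 / ((m + 1 + k : ℕ) * (m + k).choose k) := by
  have hfact : (m + 1 + k)! = (m + 1 + k) * ((m + k).choose k * m ! * k !) := by
    rw [Nat.add_choose_mul_factorial_mul_factorial, show m + 1 + k = m + k + 1 by ring,
      Nat.factorial_succ]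
  have hchoose : (m + k).choose k ≠ 0 := (Nat.choose_pos (by omega)).ne'
  rw [div_eq_div_iff (Nat.cast_ne_zero.2 (Nat.factorial_ne_zero _))
    (mul_ne_zero (Nat.cast_ne_zero.2 (by omega)) (Nat.cast_ne_zero.2 hchoose)), hfact]
  push_cast
  ring

theorem hasDerivAt_binomR_natCast (m k : ℕ) :
    HasDerivAt (binomR · (m + 1 + k)) ((-1) ^ k / ((m + 1 + k : ℕ) * (m + k).choose k)) m := by
  have hsplit : (binomR · (m + 1 + k)) = fun y : ℝ =>
      (y - m) * ((∏ i ∈ range m, (y - i)) * ∏ i ∈ range k, (y - (m + 1 + i : ℕ))) /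
        (m + 1 + k)! := by
    ext y
    rw [binomR, prod_range_add_one_add_sub]
  have h := (hasDerivAt_sub_mul_of_continuousAt (x := (m : ℝ))
    (g := fun y : ℝ => (∏ i ∈ range m, (y - i)) * ∏ i ∈ range k, (y - (m + 1 + i : ℕ)))
    (by fun_prop)).div_const ((m + 1 + k)! : ℝ)
  rw [prod_range_natCast_sub_eq_factorial, prod_range_natCast_sub_add_one_add] at h
  rw [hsplit]
  refine h.congr_deriv ?_
  rw [mul_left_comm, mul_div_assoc, factorial_mul_factorial_div_factorial_add_one, mul_one_div]

theorem deriv_binom_shift_at_neg_one_general (n r : ℕ) (hn : 1 ≤ n) (hr : r ≤ n - 1) :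
    deriv (fun y : ℝ => binomR (y + (n : ℝ) - (r : ℝ)) n) (-1) =
      (-1 : ℝ) ^ r / ((n : ℝ) * ((n - 1).choose r : ℝ)) := by
  obtain ⟨m, rfl⟩ : ∃ m, n = m + 1 + r := ⟨n - 1 - r, by omega⟩
  have hshift : HasDerivAt (fun y : ℝ => y + (m + 1 + r : ℕ) - r) 1 (-1) :=
    ((hasDerivAt_id _).add_const _).sub_const _
  have hroot : (-1 : ℝ) + (m + 1 + r : ℕ) - r = m := by
    push_cast
    ring
  have h := (hroot ▸ hasDerivAt_binomR_natCast m r).comp (-1) hshift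
  rw [mul_one] at h
  rw [show m + 1 + r - 1 = m + r by omega]
  exact h.deriv

/-- For all integers `n ≥ 1` and `1 ≤ r ≤ n−1`, the derivative of
`y ↦ binom(y+n−r, n)` at `y = −1` equals `(−1)^r / (n C(n−1, r))`. -/
theorem deriv_binom_shift_at_neg_one (n r : ℕ) (hn : 1 ≤ n) (hr1 : 1 ≤ r) (hr : r ≤ n - 1) :
    deriv (fun y : ℝ => binomR (y + (n : ℝ) - (r : ℝ)) n) (-1) =
      (-1 : ℝ) ^ r / ((n : ℝ) * ((n - 1).choose r : ℝ)) :=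
  deriv_binom_shift_at_neg_one_general n r hn hr
end
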